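/- The sorting map on ℝⁿ (which maps a vector to the vector of its entries rearranged in ascending order) is an isometry with respect to the ℓ₂ norm: ‖sort(x)‖₂ = ‖x‖₂ for all x, and moreover ‖sort(x) - sort(y)‖₂ ≤ ‖x - y‖₂. -/

import Mathlib

/-!
Sorting applies a permutation of coordinates, so it preserves the norm. Hence
`‖sort x - sort y‖² = ‖x‖² + ‖y‖² - 2⟪sort x, sort y⟫`, and the contraction property reduces to
`⟪x, y⟫ ≤ ⟪sort x, sort y⟫`, which is the rearrangement inequality for the monovarying vectors
`sort x` and `sort y`.
-/

/-- Rearranges the coordinates of a vector in ascending order. -/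
noncomputable def sortVec {n : ℕ} (x : EuclideanSpace ℝ (Fin n)) :
    EuclideanSpace ℝ (Fin n) :=
  WithLp.toLp 2 (fun i => x (Tuple.sort x i))

open scoped RealInnerProductSpace

theorem norm_sub_le_norm_sub_of_inner_le {E : Type*} [NormedAddCommGroup E]
    [InnerProductSpace ℝ E] {a b x y : E} (ha : ‖a‖ = ‖x‖) (hb : ‖b‖ = ‖y‖)
    (h : ⟪x, y⟫ ≤ ⟪a, b⟫) : ‖a - b‖ ≤ ‖x - y‖ := by
  rw [← sq_le_sq₀ (norm_nonneg _) (norm_nonneg _), norm_sub_sq_real, norm_sub_sq_real, ha, hb]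
  linarith

theorem sortVec_eq_piLpCongrLeft {n : ℕ} (x : EuclideanSpace ℝ (Fin n)) :
    sortVec x = LinearIsometryEquiv.piLpCongrLeft 2 ℝ ℝ (Tuple.sort x).symm x := rfl

theorem norm_sortVec {n : ℕ} (x : EuclideanSpace ℝ (Fin n)) : ‖sortVec x‖ = ‖x‖ := by
  rw [sortVec_eq_piLpCongrLeft, LinearIsometryEquiv.norm_map]

theorem monotone_sortVec {n : ℕ} (x : EuclideanSpace ℝ (Fin n)) : Monotone (sortVec x) :=
  Tuple.monotone_sort x

theorem inner_le_inner_sortVec {n : ℕ} (x y : EuclideanSpace ℝ (Fin n)) :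
    ⟪x, y⟫ ≤ ⟪sortVec x, sortVec y⟫ := by
  have hmono := (monotone_sortVec x).monovary (monotone_sortVec y)
  let σ := (Tuple.sort x).trans (Tuple.sort y).symm
  calc ⟪x, y⟫ = ∑ i, sortVec x i * sortVec y (σ i) := by
        rw [PiLp.inner_apply, ← Equiv.sum_comp (Tuple.sort x)]
        simp [sortVec, σ, mul_comm]
    _ ≤ ∑ i, sortVec x i * sortVec y i := hmono.sum_mul_comp_perm_le_sum_mul
    _ = ⟪sortVec x, sortVec y⟫ := by simp [PiLp.inner_apply, mul_comm]

theorem sort_isometry {n : ℕ} :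
    (∀ x : EuclideanSpace ℝ (Fin n), ‖sortVec x‖ = ‖x‖) ∧
    (∀ x y : EuclideanSpace ℝ (Fin n), ‖sortVec x - sortVec y‖ ≤ ‖x - y‖) :=
  ⟨norm_sortVec, fun x y =>
    norm_sub_le_norm_sub_of_inner_le (norm_sortVec x) (norm_sortVec y) (inner_le_inner_sortVec x y)⟩
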